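/- arXiv:2404.12364 — 2 statements merged into one kernel-verified Lean document; each statement's English description precedes it below -/
import Mathlib

section
/- For all real numbers ξ, ξ₁, μ, μ₁, τ, τ₁ with ξ ≠ 0, ξ₁ ≠ 0, ξ - ξ₁ ≠ 0, and σ₊ defined by σ₊(τ,ξ,μ) = τ - ξ³ + μ²/ξ, one has max(|σ₊(τ₁,ξ₁,μ₁)|, |σ₊(τ-τ₁,ξ-ξ₁,μ-μ₁)|, |σ₊(τ,ξ,μ)|) ≥ |ξ·ξ₁·(ξ-ξ₁)|. -/
/-- For the KP-II modulation `σ₊(τ,ξ,μ) = τ - ξ³ + μ²/ξ`, the largest of the three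
modulations dominates `|ξ ξ₁ (ξ-ξ₁)|`. -/
theorem kpII_max_modulation
    (ξ ξ₁ μ μ₁ τ τ₁ : ℝ) (hξ : ξ ≠ 0) (hξ₁ : ξ₁ ≠ 0) (hξξ₁ : ξ - ξ₁ ≠ 0) :
    |ξ * ξ₁ * (ξ - ξ₁)| ≤
      max (max |τ₁ - ξ₁ ^ 3 + μ₁ ^ 2 / ξ₁|
               |(τ - τ₁) - (ξ - ξ₁) ^ 3 + (μ - μ₁) ^ 2 / (ξ - ξ₁)|)
          |τ - ξ ^ 3 + μ ^ 2 / ξ| := by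
  set A := τ₁ - ξ₁ ^ 3 + μ₁ ^ 2 / ξ₁ with hA
  set B := (τ - τ₁) - (ξ - ξ₁) ^ 3 + (μ - μ₁) ^ 2 / (ξ - ξ₁) with hB
  set C := τ - ξ ^ 3 + μ ^ 2 / ξ with hC
  set P := ξ * ξ₁ * (ξ - ξ₁) with hP
  have hPne : P ≠ 0 := by
    exact mul_ne_zero (mul_ne_zero hξ hξ₁) hξξ₁
  have key : A + B - C = 3 * P + (μ * ξ₁ - μ₁ * ξ) ^ 2 / P := by
    rw [hA, hB, hC, hP]
    field_simp
    ring
  have hQ : 3 * |P| ≤ |A + B - C| := by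
    rw [key]
    rcases lt_or_gt_of_ne hPne with hneg | hpos
    · have hq : (μ * ξ₁ - μ₁ * ξ) ^ 2 / P ≤ 0 :=
        div_nonpos_of_nonneg_of_nonpos (sq_nonneg _) hneg.le
      have : 3 * P + (μ * ξ₁ - μ₁ * ξ) ^ 2 / P ≤ 3 * P := by linarith
      rw [abs_of_neg hneg, abs_of_neg (by linarith : 3 * P + (μ * ξ₁ - μ₁ * ξ) ^ 2 / P < 0)]
      linarith
    · have hq : 0 ≤ (μ * ξ₁ - μ₁ * ξ) ^ 2 / P := div_nonneg (sq_nonneg _) hpos.le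
      rw [abs_of_pos hpos, abs_of_pos (by linarith : 0 < 3 * P + (μ * ξ₁ - μ₁ * ξ) ^ 2 / P)]
      linarith
  have htri : |A + B - C| ≤ |A| + |B| + |C| := by
    calc |A + B - C| ≤ |A + B| + |C| := abs_sub _ _
    _ ≤ |A| + |B| + |C| := by linarith [abs_add_le A B]
  have h1 : |A| ≤ max (max |A| |B|) |C| := le_max_of_le_left (le_max_left _ _)
  have h2 : |B| ≤ max (max |A| |B|) |C| := le_max_of_le_left (le_max_right _ _)
  have h3 : |C| ≤ max (max |A| |B|) |C| := le_max_right _ _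
  linarith
end

section
/- Let u : ℝ² → ℝ be a Schwartz function and let V be a Schwartz function with ∂_x V = ∂_y u (so that V = ∂_x^{-1} ∂_y u). Then for every p with 2 ≤ p ≤ 6 there is a constant C = C_p > 0, independent of u, such that ‖u‖_{L^p(ℝ²)} ≤ C ‖u‖_{L²(ℝ²)}^{(6-p)/(2p)} · ‖∂_x u‖_{L²(ℝ²)}^{(p-2)/p} · ‖V‖_{L²(ℝ²)}^{(p-2)/(2p)}. -/
/-!
On each horizontal line, `u(x,y)² ≤ 2 ∫ |u ∂ₓu| dx`, so by Cauchy–Schwarz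
`∫ u(·,y)⁶ ≤ 4 (∫ u(·,y)²)² ∫ (∂ₓu)(·,y)²`. The hypothesis `∂ₓV = ∂ᵧu` controls the mass of
the lines: `d/dy ∫ u² dx = 2 ∫ u ∂ₓV dx = -2 ∫ ∂ₓu V dx`, hence `∫ u(·,y)² dx ≤ 2 ‖∂ₓu V‖₁`
for every `y`. Integrating in `y` and applying Cauchy–Schwarz once more gives
`‖u‖₆⁶ ≤ 16 ‖∂ₓu‖₂⁴ ‖V‖₂²`, and the range `2 ≤ p ≤ 6` follows by interpolating between
`L²` and `L⁶`.
-/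

open MeasureTheory SchwartzMap Filter Set
open scoped LineDeriv ENNReal

local notation "∂ₓ" => LineDeriv.lineDerivOp ((1 : ℝ), (0 : ℝ))
local notation "∂ᵧ" => LineDeriv.lineDerivOp ((0 : ℝ), (1 : ℝ))

theorem abs_le_integral_abs_of_hasDerivAt {f f' : ℝ → ℝ} (hderiv : ∀ x, HasDerivAt f (f' x) x)
    (hf : Integrable f) (hf' : Integrable f') (x : ℝ) : |f x| ≤ ∫ t, |f' t| := by
  have hlim : Tendsto f atTop (nhds 0) :=
    tendsto_zero_of_hasDerivAt_of_integrableOn_Ioi (a := x) (fun t _ => hderiv t)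
      hf'.integrableOn hf.integrableOn
  have hFTC : ∫ t in Ioi x, f' t = -f x := by
    rw [integral_Ioi_of_hasDerivAt_of_tendsto' (fun t _ => hderiv t) hf'.integrableOn hlim,
      zero_sub]
  calc |f x| = |∫ t in Ioi x, f' t| := by rw [hFTC, abs_neg]
    _ ≤ ∫ t in Ioi x, |f' t| := abs_integral_le_integral_abs
    _ ≤ ∫ t, |f' t| := setIntegral_le_integral hf'.abs (ae_of_all _ fun t => abs_nonneg _)

section Lp

variable {α E : Type*} [MeasurableSpace α] {μ : Measure α}

theorem sq_integral_abs_mul_le {f g : α → ℝ} (hf : MemLp f 2 μ) (hg : MemLp g 2 μ) :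
    (∫ a, |f a * g a| ∂μ) ^ 2 ≤ (∫ a, f a ^ 2 ∂μ) * ∫ a, g a ^ 2 ∂μ := by
  have hholder := integral_mul_le_Lp_mul_Lq_of_nonneg Real.HolderConjugate.two_two
    (ae_of_all μ fun a => abs_nonneg (f a)) (ae_of_all μ fun a => abs_nonneg (g a))
    (by rw [ENNReal.ofReal_ofNat]; exact hf.abs) (by rw [ENNReal.ofReal_ofNat]; exact hg.abs)
  simp only [← abs_mul, Real.rpow_two, sq_abs, ← Real.sqrt_eq_rpow] at hholder
  rw [← Real.sq_sqrt (integral_nonneg fun a => sq_nonneg (f a)),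
    ← Real.sq_sqrt (integral_nonneg fun a => sq_nonneg (g a)), ← mul_pow]
  exact pow_le_pow_left₀ (integral_nonneg fun a => abs_nonneg _) hholder 2

theorem MemLp.toReal_eLpNorm_pow_eq_integral {f : α → ℝ} {n : ℕ} (hf : MemLp f n μ)
    (hn : n ≠ 0) (heven : Even n) : (eLpNorm f n μ).toReal ^ n = ∫ a, f a ^ n ∂μ := by
  have hint : 0 ≤ ∫ a, ‖f a‖ ^ (n : ℝ) ∂μ := integral_nonneg fun a => by positivity
  rw [hf.eLpNorm_eq_integral_rpow_norm (by exact_mod_cast hn) (ENNReal.natCast_ne_top n),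
    ENNReal.toReal_ofReal (by positivity), ENNReal.toReal_natCast, ← Real.rpow_natCast,
    ← Real.rpow_mul hint, inv_mul_cancel₀ (by exact_mod_cast hn), Real.rpow_one]
  simp_rw [Real.rpow_natCast, Real.norm_eq_abs, heven.pow_abs]

variable [NormedAddCommGroup E] {f : α → E}

theorem eLpNorm_le_eLpNorm_rpow_mul_eLpNorm_rpow (hf : AEStronglyMeasurable f μ)
    {p p₀ p₁ : ℝ≥0∞} {θ : ℝ} (hθ₀ : 0 ≤ θ) (hθ₁ : θ ≤ 1)
    (hp : p⁻¹ = ENNReal.ofReal θ * p₀⁻¹ + ENNReal.ofReal (1 - θ) * p₁⁻¹) :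
    eLpNorm f p μ ≤ eLpNorm f p₀ μ ^ θ * eLpNorm f p₁ μ ^ (1 - θ) := by
  rcases hθ₀.eq_or_lt with rfl | hθ₀
  · simp only [ENNReal.ofReal_zero, zero_mul, sub_zero, ENNReal.ofReal_one, one_mul, zero_add,
      inv_inj] at hp
    simp [hp]
  rcases hθ₁.eq_or_lt with rfl | hθ₁
  · simp only [ENNReal.ofReal_one, one_mul, sub_self, ENNReal.ofReal_zero, zero_mul, add_zero,
      inv_inj] at hp
    simp [hp]
  have hθ : ENNReal.ofReal θ ≠ 0 := by simpa using hθ₀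
  have h1θ : ENNReal.ofReal (1 - θ) ≠ 0 := by simpa using hθ₁
  have : ENNReal.HolderTriple (p₀ / ENNReal.ofReal θ) (p₁ / ENNReal.ofReal (1 - θ)) p := by
    refine ⟨?_⟩
    rw [ENNReal.inv_div (.inl ENNReal.ofReal_ne_top) (.inl hθ),
      ENNReal.inv_div (.inl ENNReal.ofReal_ne_top) (.inl h1θ), hp, div_eq_mul_inv, div_eq_mul_inv]
  have hsplit : ∀ a, ‖f a‖ = ‖f a‖ ^ θ * ‖f a‖ ^ (1 - θ) := fun a => by
    rw [← Real.rpow_add' (norm_nonneg _) (by norm_num), add_sub_cancel, Real.rpow_one]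
  calc eLpNorm f p μ = eLpNorm (fun a => ‖f a‖ ^ θ * ‖f a‖ ^ (1 - θ)) p μ := by
        simp_rw [← hsplit, eLpNorm_norm]
    _ ≤ 1 * eLpNorm (fun a => ‖f a‖ ^ θ) (p₀ / ENNReal.ofReal θ) μ *
          eLpNorm (fun a => ‖f a‖ ^ (1 - θ)) (p₁ / ENNReal.ofReal (1 - θ)) μ :=
        eLpNorm_le_eLpNorm_mul_eLpNorm'_of_norm
          (hf.norm.aemeasurable.pow_const θ).aestronglyMeasurable
          (hf.norm.aemeasurable.pow_const _).aestronglyMeasurable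
          (· * ·) 1 (ae_of_all _ fun a => by simp [norm_mul])
    _ = eLpNorm f p₀ μ ^ θ * eLpNorm f p₁ μ ^ (1 - θ) := by
        rw [one_mul, eLpNorm_norm_rpow f hθ₀, eLpNorm_norm_rpow f (sub_pos.2 hθ₁),
          ENNReal.div_mul_cancel hθ ENNReal.ofReal_ne_top,
          ENNReal.div_mul_cancel h1θ ENNReal.ofReal_ne_top]

theorem toReal_eLpNorm_ofReal_le_rpow_mul_rpow {p p₀ p₁ θ : ℝ} (hp : 0 < p) (hp₀ : 0 < p₀)
    (hp₁ : 0 < p₁) (hθ₀ : 0 ≤ θ) (hθ₁ : θ ≤ 1) (hpθ : p⁻¹ = θ / p₀ + (1 - θ) / p₁)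
    (hf₀ : MemLp f (ENNReal.ofReal p₀) μ) (hf₁ : MemLp f (ENNReal.ofReal p₁) μ) :
    (eLpNorm f (ENNReal.ofReal p) μ).toReal ≤
      (eLpNorm f (ENNReal.ofReal p₀) μ).toReal ^ θ *
        (eLpNorm f (ENNReal.ofReal p₁) μ).toReal ^ (1 - θ) := by
  have hexp : (ENNReal.ofReal p)⁻¹ = ENNReal.ofReal θ * (ENNReal.ofReal p₀)⁻¹ +
      ENNReal.ofReal (1 - θ) * (ENNReal.ofReal p₁)⁻¹ := by
    rw [← ENNReal.ofReal_inv_of_pos hp, ← ENNReal.ofReal_inv_of_pos hp₀,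
      ← ENNReal.ofReal_inv_of_pos hp₁, ← ENNReal.ofReal_mul hθ₀,
      ← ENNReal.ofReal_mul (sub_nonneg.2 hθ₁), ← ENNReal.ofReal_add (by positivity)
        (mul_nonneg (sub_nonneg.2 hθ₁) (inv_nonneg.2 hp₁.le)), hpθ, div_eq_mul_inv,
      div_eq_mul_inv]
  rw [ENNReal.toReal_rpow, ENNReal.toReal_rpow, ← ENNReal.toReal_mul]
  exact ENNReal.toReal_mono
    (ENNReal.mul_ne_top (ENNReal.rpow_ne_top_of_nonneg hθ₀ hf₀.eLpNorm_ne_top)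
      (ENNReal.rpow_ne_top_of_nonneg (sub_nonneg.2 hθ₁) hf₁.eLpNorm_ne_top))
    (eLpNorm_le_eLpNorm_rpow_mul_eLpNorm_rpow hf₀.1 hθ₀ hθ₁ hexp)

end Lp

section OneDim

variable {φ φ' : ℝ → ℝ}

theorem sq_le_two_mul_integral_abs_mul_deriv (hderiv : ∀ x, HasDerivAt φ (φ' x) x)
    (hφ : MemLp φ 2) (hφ' : MemLp φ' 2) (x : ℝ) :
    φ x ^ 2 ≤ 2 * ∫ t, |φ t * φ' t| := by
  have hsq : ∀ t, HasDerivAt (fun s => φ s ^ 2) (2 * (φ t * φ' t)) t := fun t =>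
    ((hderiv t).fun_pow 2).congr_deriv (by push_cast; ring)
  have h := abs_le_integral_abs_of_hasDerivAt hsq ((memLp_two_iff_integrable_sq hφ.1).1 hφ)
    ((hφ.integrable_mul hφ').const_mul 2) x
  simpa [abs_mul, integral_const_mul] using h

theorem integral_pow_six_le_of_hasDerivAt (hderiv : ∀ x, HasDerivAt φ (φ' x) x)
    (hφ : MemLp φ 2) (hφ' : MemLp φ' 2) :
    ∫ x, φ x ^ 6 ≤ 4 * (∫ x, φ x ^ 2) ^ 2 * ∫ x, φ' x ^ 2 := by
  set G := 2 * ∫ t, |φ t * φ' t|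
  have hpt : ∀ x, φ x ^ 6 ≤ G ^ 2 * φ x ^ 2 := fun x => by
    have := pow_le_pow_left₀ (sq_nonneg _)
      (sq_le_two_mul_integral_abs_mul_deriv hderiv hφ hφ' x) 2
    nlinarith [sq_nonneg (φ x)]
  have hG : G ^ 2 ≤ 4 * ((∫ x, φ x ^ 2) * ∫ x, φ' x ^ 2) := by
    have := sq_integral_abs_mul_le hφ hφ'
    nlinarith
  calc ∫ x, φ x ^ 6 ≤ ∫ x, G ^ 2 * φ x ^ 2 :=
        integral_mono_of_nonneg (ae_of_all _ fun x => by positivity)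
          (((memLp_two_iff_integrable_sq hφ.1).1 hφ).const_mul _) (ae_of_all _ hpt)
    _ = G ^ 2 * ∫ x, φ x ^ 2 := integral_const_mul _ _
    _ ≤ 4 * ((∫ x, φ x ^ 2) * ∫ x, φ' x ^ 2) * ∫ x, φ x ^ 2 :=
        mul_le_mul_of_nonneg_right hG (integral_nonneg fun x => sq_nonneg _)
    _ = 4 * (∫ x, φ x ^ 2) ^ 2 * ∫ x, φ' x ^ 2 := by ring

end OneDim

namespace SchwartzMap

section Slice

variable {F : Type*} [NormedAddCommGroup F] [NormedSpace ℝ F]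

noncomputable def sliceX (y : ℝ) (f : 𝓢(ℝ × ℝ, F)) : 𝓢(ℝ, F) :=
  compCLM ℝ (g := fun x : ℝ => (x, y))
    (by
      convert (ContinuousLinearMap.inl ℝ ℝ ℝ).hasTemperateGrowth.add (.const (0, y)) using 1
      ext x <;> simp)
    ⟨1, 1, fun x => by simpa using (norm_fst_le (x, y)).trans (le_add_of_nonneg_left zero_le_one)⟩
    f

@[simp]
theorem sliceX_apply (y : ℝ) (f : 𝓢(ℝ × ℝ, F)) (x : ℝ) : sliceX y f x = f (x, y) := rfl

theorem hasDerivAt_sliceX (y : ℝ) (f : 𝓢(ℝ × ℝ, F)) (x : ℝ) :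
    HasDerivAt (sliceX y f) (sliceX y (∂ₓ f) x) x :=
  (f.hasFDerivAt (x, y)).comp_hasDerivAt x ((hasDerivAt_id x).prodMk (hasDerivAt_const x y))

end Slice

theorem integral_fst_mul_lineDerivOp (y : ℝ) (f g : 𝓢(ℝ × ℝ, ℝ)) :
    ∫ x, f (x, y) * ∂ₓ g (x, y) = -∫ x, ∂ₓ f (x, y) * g (x, y) := by
  have h := integral_mul_deriv_eq_neg_deriv_mul (sliceX y f) (sliceX y g)
  simpa only [(hasDerivAt_sliceX y _ _).deriv, sliceX_apply] using h

theorem exists_abs_le_mul_inv_one_add_sq_fst (g : 𝓢(ℝ × ℝ, ℝ)) :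
    ∃ C, ∀ x y, |g (x, y)| ≤ C * (1 + x ^ 2)⁻¹ := by
  obtain ⟨C₀, -, hC₀⟩ := g.decay 0 0
  obtain ⟨C₂, -, hC₂⟩ := g.decay 2 0
  refine ⟨C₀ + C₂, fun x y => ?_⟩
  have h₀ := hC₀ (x, y)
  have h₂ := hC₂ (x, y)
  simp only [pow_zero, one_mul, norm_iteratedFDeriv_zero, Real.norm_eq_abs] at h₀ h₂
  have hx : x ^ 2 ≤ ‖(x, y)‖ ^ 2 := by
    simpa using pow_le_pow_left₀ (abs_nonneg x) (norm_fst_le (x, y)) 2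
  rw [← div_eq_mul_inv, le_div_iff₀ (by positivity)]
  nlinarith [abs_nonneg (g (x, y))]

theorem hasDerivAt_integral_fst (w : 𝓢(ℝ × ℝ, ℝ)) (y : ℝ) :
    HasDerivAt (fun t => ∫ x, w (x, t)) (∫ x, ∂ᵧ w (x, y)) y := by
  obtain ⟨C, hC⟩ := exists_abs_le_mul_inv_one_add_sq_fst (∂ᵧ w)
  have hderiv : ∀ x t, HasDerivAt (fun s => w (x, s)) (∂ᵧ w (x, t)) t := fun x t =>
    (w.hasFDerivAt (x, t)).comp_hasDerivAt t ((hasDerivAt_const t x).prodMk (hasDerivAt_id t))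
  exact (hasDerivAt_integral_of_dominated_loc_of_deriv_le (Metric.ball_mem_nhds y one_pos)
    (Eventually.of_forall fun t => (sliceX t w).integrable.aestronglyMeasurable)
    (sliceX y w).integrable (sliceX y (∂ᵧ w)).integrable.aestronglyMeasurable
    (ae_of_all _ fun x t _ => hC x t) (integrable_inv_one_add_sq.const_mul C)
    (ae_of_all _ fun x t _ => hderiv x t)).2

theorem integrable_integral_fst (w : 𝓢(ℝ × ℝ, ℝ)) : Integrable (fun y => ∫ x, w (x, y)) :=
  w.integrable.integral_prod_right

theorem abs_integral_fst_le (w : 𝓢(ℝ × ℝ, ℝ)) (y : ℝ) :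
    |∫ x, w (x, y)| ≤ ∫ t, |∫ x, ∂ᵧ w (x, t)| :=
  abs_le_integral_abs_of_hasDerivAt (hasDerivAt_integral_fst w) (integrable_integral_fst w)
    (integrable_integral_fst (∂ᵧ w)) y

theorem lineDerivOp_pairing_mul_self (u : 𝓢(ℝ × ℝ, ℝ)) (m z : ℝ × ℝ) :
    ∂_{m} (pairing (ContinuousLinearMap.mul ℝ ℝ) u u) z = 2 * (u z * ∂_{m} u z) := by
  have h : ⇑(pairing (ContinuousLinearMap.mul ℝ ℝ) u u) = ⇑u * ⇑u := rfl
  rw [lineDerivOp_apply_eq_fderiv, lineDerivOp_apply_eq_fderiv, h,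
    ((u.hasFDerivAt z).mul (u.hasFDerivAt z)).fderiv]
  simp only [add_apply, smul_apply, smul_eq_mul]
  ring

theorem integral_sq_fst_le (u V : 𝓢(ℝ × ℝ, ℝ)) (hV : ∂ₓ V = ∂ᵧ u) (y : ℝ) :
    ∫ x, u (x, y) ^ 2 ≤ 2 * ∫ z, |∂ₓ u z * V z| := by
  set w := pairing (ContinuousLinearMap.mul ℝ ℝ) u u with hw_def
  have hw : ∀ t, ∫ x, ∂ᵧ w (x, t) = -2 * ∫ x, ∂ₓ u (x, t) * V (x, t) := fun t => by
    simp_rw [hw_def, lineDerivOp_pairing_mul_self, ← hV]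
    rw [integral_const_mul, integral_fst_mul_lineDerivOp]
    ring
  have huV : Integrable (fun z => |∂ₓ u z * V z|) :=
    (((∂ₓ u).memLp 2).integrable_mul (V.memLp 2)).abs
  calc ∫ x, u (x, y) ^ 2 = |∫ x, w (x, y)| := by
        rw [abs_of_nonneg (integral_nonneg fun x => mul_self_nonneg _)]
        simp [w, sq]
    _ ≤ ∫ t, |∫ x, ∂ᵧ w (x, t)| := abs_integral_fst_le w y
    _ ≤ ∫ t, 2 * ∫ x, |∂ₓ u (x, t) * V (x, t)| := by
        refine integral_mono (integrable_integral_fst _).abs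
          (huV.integral_prod_right.const_mul 2) fun t => ?_
        rw [hw, abs_mul, abs_neg, abs_two]
        gcongr
        exact abs_integral_le_integral_abs
    _ = 2 * ∫ z, |∂ₓ u z * V z| := by
        rw [integral_const_mul]
        exact congrArg _ (integral_prod_symm _ huV).symm

theorem integral_pow_six_le (u V : 𝓢(ℝ × ℝ, ℝ)) (hV : ∂ₓ V = ∂ᵧ u) :
    ∫ z, u z ^ 6 ≤ 16 * (∫ z, ∂ₓ u z ^ 2) ^ 2 * ∫ z, V z ^ 2 := by
  set K := 2 * ∫ z, |∂ₓ u z * V z|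
  have hK : K ^ 2 ≤ 4 * ((∫ z, ∂ₓ u z ^ 2) * ∫ z, V z ^ 2) := by
    have := sq_integral_abs_mul_le ((∂ₓ u).memLp 2) (V.memLp 2)
    nlinarith
  have hline : ∀ y, ∫ x, u (x, y) ^ 6 ≤ 4 * K ^ 2 * ∫ x, ∂ₓ u (x, y) ^ 2 := fun y => by
    have hGN := integral_pow_six_le_of_hasDerivAt (hasDerivAt_sliceX y u)
      ((sliceX y u).memLp 2) ((sliceX y (∂ₓ u)).memLp 2)
    simp only [sliceX_apply] at hGN
    have hmass := integral_sq_fst_le u V hV y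
    have hmass₀ : 0 ≤ ∫ x, u (x, y) ^ 2 := integral_nonneg fun x => sq_nonneg _
    calc ∫ x, u (x, y) ^ 6 ≤ 4 * (∫ x, u (x, y) ^ 2) ^ 2 * ∫ x, ∂ₓ u (x, y) ^ 2 := hGN
      _ ≤ 4 * K ^ 2 * ∫ x, ∂ₓ u (x, y) ^ 2 := by gcongr
  have hu6 : Integrable (fun z => u z ^ 6) := by
    simpa [Real.norm_eq_abs, Even.pow_abs ⟨3, rfl⟩] using
      (u.memLp 6).integrable_norm_pow (by norm_num)
  have hux2 : Integrable (fun z => ∂ₓ u z ^ 2) :=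
    (memLp_two_iff_integrable_sq (∂ₓ u).continuous.aestronglyMeasurable).1 ((∂ₓ u).memLp 2)
  calc ∫ z, u z ^ 6 = ∫ y, ∫ x, u (x, y) ^ 6 := integral_prod_symm _ hu6
    _ ≤ ∫ y, 4 * K ^ 2 * ∫ x, ∂ₓ u (x, y) ^ 2 :=
        integral_mono_of_nonneg (ae_of_all _ fun y => integral_nonneg fun x => by positivity)
          (hux2.integral_prod_right.const_mul _) (ae_of_all _ hline)
    _ = 4 * K ^ 2 * ∫ z, ∂ₓ u z ^ 2 := by
        rw [integral_const_mul]
        exact congrArg _ (integral_prod_symm _ hux2).symm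
    _ ≤ 16 * (∫ z, ∂ₓ u z ^ 2) ^ 2 * ∫ z, V z ^ 2 := by
        have : 0 ≤ ∫ z, ∂ₓ u z ^ 2 := integral_nonneg fun z => sq_nonneg _
        nlinarith

theorem toReal_eLpNorm_six_pow_three_le (u V : 𝓢(ℝ × ℝ, ℝ)) (hV : ∂ₓ V = ∂ᵧ u) :
    (eLpNorm u 6 volume).toReal ^ 3 ≤
      4 * (eLpNorm (∂ₓ u : 𝓢(ℝ × ℝ, ℝ)) 2 volume).toReal ^ 2 * (eLpNorm V 2 volume).toReal := by
  have h₆ := MemLp.toReal_eLpNorm_pow_eq_integral (u.memLp (6 : ℕ)) (by norm_num) ⟨3, rfl⟩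
  have h₂ := MemLp.toReal_eLpNorm_pow_eq_integral ((∂ₓ u).memLp (2 : ℕ)) (by norm_num) even_two
  have h₂' := MemLp.toReal_eLpNorm_pow_eq_integral (V.memLp (2 : ℕ)) (by norm_num) even_two
  simp only [Nat.cast_ofNat] at h₆ h₂ h₂'
  refine le_of_pow_le_pow_left₀ two_ne_zero (by positivity) ?_
  calc ((eLpNorm u 6 volume).toReal ^ 3) ^ 2 = ∫ z, u z ^ 6 := by rw [← h₆]; ring
    _ ≤ 16 * (∫ z, ∂ₓ u z ^ 2) ^ 2 * ∫ z, V z ^ 2 := integral_pow_six_le u V hV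
    _ = _ := by rw [← h₂, ← h₂']; ring

end SchwartzMap

/-- Anisotropic Sobolev inequality for the KP energy space: for Schwartz `u` on `ℝ²`
and `V` with `∂_x V = ∂_y u` (i.e. `V = ∂_x⁻¹ ∂_y u`), and `2 ≤ p ≤ 6`,
`‖u‖_{L^p} ≤ C ‖u‖_{L²}^{(6-p)/(2p)} ‖∂_x u‖_{L²}^{(p-2)/p} ‖V‖_{L²}^{(p-2)/(2p)}`. -/
theorem anisotropic_sobolev (p : ℝ) (hp2 : 2 ≤ p) (hp6 : p ≤ 6) :
    ∃ C > 0, ∀ (u V : 𝓢(ℝ × ℝ, ℝ)),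
      (∀ z : ℝ × ℝ, fderiv ℝ V z (1, 0) = fderiv ℝ u z (0, 1)) →
      (eLpNorm (⇑u) (ENNReal.ofReal p) (volume : Measure (ℝ × ℝ))).toReal ≤
        C * (eLpNorm (⇑u) 2 (volume : Measure (ℝ × ℝ))).toReal ^ ((6 - p) / (2 * p))
          * (eLpNorm (fun z : ℝ × ℝ => fderiv ℝ u z (1, 0)) 2
              (volume : Measure (ℝ × ℝ))).toReal ^ ((p - 2) / p)
          * (eLpNorm (⇑V) 2 (volume : Measure (ℝ × ℝ))).toReal ^ ((p - 2) / (2 * p)) := by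
  refine ⟨4 ^ ((p - 2) / (2 * p)), by positivity, fun u V hV => ?_⟩
  set θ := (6 - p) / (2 * p)
  set a := (p - 2) / (2 * p)
  have hp : 0 < p := by linarith
  have h3a : 1 - θ = (3 : ℕ) * a := by simp only [θ, a]; push_cast; field_simp; ring
  have h2a : (p - 2) / p = (2 : ℕ) * a := by simp only [a]; push_cast; field_simp
  have hinterp := toReal_eLpNorm_ofReal_le_rpow_mul_rpow (θ := θ) hp two_pos
    (by norm_num : (0 : ℝ) < 6) (div_nonneg (by linarith) (by linarith))
    (by rw [div_le_one (by positivity)]; linarith) (by simp only [θ]; field_simp; ring)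
    (u.memLp _ volume) (u.memLp _ volume)
  simp only [ENNReal.ofReal_ofNat] at hinterp
  rw [h3a, Real.rpow_mul ENNReal.toReal_nonneg, Real.rpow_natCast] at hinterp
  have h₆ := toReal_eLpNorm_six_pow_three_le u V (SchwartzMap.ext hV)
  -- the statement's `fun z => fderiv ℝ u z (1, 0)` is `∂ₓ u` unfolded
  change _ ≤ _ * _ * (eLpNorm (∂ₓ u : 𝓢(ℝ × ℝ, ℝ)) 2 volume).toReal ^ _ * _
  calc _ ≤ _ := hinterp
    _ ≤ (eLpNorm u 2 volume).toReal ^ θ *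
          (4 * (eLpNorm (∂ₓ u : 𝓢(ℝ × ℝ, ℝ)) 2 volume).toReal ^ 2 *
            (eLpNorm V 2 volume).toReal) ^ a := by gcongr
    _ = _ := by
      rw [Real.mul_rpow (by positivity) ENNReal.toReal_nonneg,
        Real.mul_rpow (by positivity) (by positivity), h2a, Real.rpow_mul ENNReal.toReal_nonneg,
        Real.rpow_natCast]
      ring
end
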